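/- Let Db be a database, A a set of attributes, and LE_A the set of least elements (for the order ⪯) of the A-equivalence classes of the formal concepts of Db. Then the set of formal concepts of the projected database π_A(Db) equals { (X ∩ A, Y) : (X,Y) ∈ LE_A }. -/

import Mathlib

/-!
Concepts are the pairs fixed by the two derivation operators, and every attribute set `B`
generates a concept `(B'', B')` lying below each concept whose attribute set contains `B`.
For a concept `(X, Y)` of `π_A(Db)`, the concept of `Db` generated by `X` meets `A` in `X`, hence
is the least element of its `A`-class. Conversely, the least element `(X, Y)` of an `A`-class lies
above the concept generated by `X ∩ A`, which belongs to the same class, so the two coincide and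
`Y = (X ∩ A)'`.
-/

variable {α β : Type*} [DecidableEq α] [DecidableEq β]

/-- `(X, Y)` is a 1-rectangle of the database with relation `Db`,
attribute set `AA` and object set `OO`: every attribute of `X` is in
relation with every object of `Y`. -/
def IsRect (Db : α → β → Prop) (AA : Finset α) (OO : Finset β)
    (X : Finset α) (Y : Finset β) : Prop :=
  X ⊆ AA ∧ Y ⊆ OO ∧ ∀ a ∈ X, ∀ o ∈ Y, Db a o

/-- A formal concept is a 1-rectangle that is maximal for componentwise
inclusion of bi-sets. -/
def IsConcept (Db : α → β → Prop) (AA : Finset α) (OO : Finset β)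
    (X : Finset α) (Y : Finset β) : Prop :=
  IsRect Db AA OO X Y ∧
    ∀ X' Y', IsRect Db AA OO X' Y' → X ⊆ X' → Y ⊆ Y' → X = X' ∧ Y = Y'

open Classical in
noncomputable def commonAttrs (Db : α → β → Prop) (AA : Finset α) (Y : Finset β) : Finset α :=
  {a ∈ AA | ∀ o ∈ Y, Db a o}

open Classical in
noncomputable def commonObjs (Db : α → β → Prop) (OO : Finset β) (X : Finset α) : Finset β :=
  {o ∈ OO | ∀ a ∈ X, Db a o}

section Derivation

omit [DecidableEq α] [DecidableEq β]

variable {Db : α → β → Prop} {AA A B X X' : Finset α} {OO Y Y' : Finset β}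

@[simp]
lemma mem_commonAttrs {a : α} : a ∈ commonAttrs Db AA Y ↔ a ∈ AA ∧ ∀ o ∈ Y, Db a o := by
  classical simp [commonAttrs]

@[simp]
lemma mem_commonObjs {o : β} : o ∈ commonObjs Db OO X ↔ o ∈ OO ∧ ∀ a ∈ X, Db a o := by
  classical simp [commonObjs]

lemma commonAttrs_subset : commonAttrs Db AA Y ⊆ AA := fun _ ha => (mem_commonAttrs.mp ha).1

lemma commonObjs_subset : commonObjs Db OO X ⊆ OO := fun _ ho => (mem_commonObjs.mp ho).1

lemma commonAttrs_anti (h : Y ⊆ Y') : commonAttrs Db AA Y' ⊆ commonAttrs Db AA Y :=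
  fun _ ha => mem_commonAttrs.mpr
    ⟨(mem_commonAttrs.mp ha).1, fun o ho => (mem_commonAttrs.mp ha).2 o (h ho)⟩

lemma commonObjs_anti (h : X ⊆ X') : commonObjs Db OO X' ⊆ commonObjs Db OO X :=
  fun _ ho => mem_commonObjs.mpr
    ⟨(mem_commonObjs.mp ho).1, fun a ha => (mem_commonObjs.mp ho).2 a (h ha)⟩

lemma commonAttrs_inter_of_subset [DecidableEq α] (hA : A ⊆ AA) :
    commonAttrs Db AA Y ∩ A = commonAttrs Db A Y := by
  ext a
  simp only [Finset.mem_inter, mem_commonAttrs]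
  exact ⟨fun ⟨⟨_, h⟩, ha⟩ => ⟨ha, h⟩, fun ⟨ha, h⟩ => ⟨⟨hA ha, h⟩, ha⟩⟩

lemma IsRect.subset_commonAttrs (h : IsRect Db AA OO X Y) : X ⊆ commonAttrs Db AA Y :=
  fun a ha => mem_commonAttrs.mpr ⟨h.1 ha, fun o ho => h.2.2 a ha o ho⟩

lemma IsRect.subset_commonObjs (h : IsRect Db AA OO X Y) : Y ⊆ commonObjs Db OO X :=
  fun o ho => mem_commonObjs.mpr ⟨h.2.1 ho, fun a ha => h.2.2 a ha o ho⟩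

lemma isRect_commonAttrs (hY : Y ⊆ OO) : IsRect Db AA OO (commonAttrs Db AA Y) Y :=
  ⟨commonAttrs_subset, hY, fun _ ha o ho => (mem_commonAttrs.mp ha).2 o ho⟩

lemma isRect_commonObjs (hX : X ⊆ AA) : IsRect Db AA OO X (commonObjs Db OO X) :=
  ⟨hX, commonObjs_subset, fun a ha _ ho => (mem_commonObjs.mp ho).2 a ha⟩

theorem isConcept_iff :
    IsConcept Db AA OO X Y ↔ X = commonAttrs Db AA Y ∧ Y = commonObjs Db OO X := by
  constructor
  · rintro ⟨hrect, hmax⟩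
    exact ⟨(hmax _ _ (isRect_commonAttrs hrect.2.1) hrect.subset_commonAttrs subset_rfl).1,
      (hmax _ _ (isRect_commonObjs hrect.1) subset_rfl hrect.subset_commonObjs).2⟩
  · rintro ⟨hX, hY⟩
    have hrect : IsRect Db AA OO X Y := by
      rw [hX]
      exact isRect_commonAttrs (hY ▸ commonObjs_subset)
    refine ⟨hrect, fun X' Y' hrect' hXX' hYY' => ⟨?_, ?_⟩⟩
    · exact hXX'.antisymm (hX ▸ hrect'.subset_commonAttrs.trans (commonAttrs_anti hYY'))
    · exact hYY'.antisymm (hY ▸ hrect'.subset_commonObjs.trans (commonObjs_anti hXX'))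

theorem isConcept_commonAttrs_commonObjs (hB : B ⊆ AA) :
    IsConcept Db AA OO (commonAttrs Db AA (commonObjs Db OO B)) (commonObjs Db OO B) := by
  refine isConcept_iff.mpr ⟨rfl, ?_⟩
  have hB_sub : B ⊆ commonAttrs Db AA (commonObjs Db OO B) :=
    (isRect_commonObjs hB).subset_commonAttrs
  exact (isRect_commonAttrs commonObjs_subset).subset_commonObjs.antisymm
    (commonObjs_anti hB_sub)

lemma IsConcept.subset_commonObjs_of_subset (h : IsConcept Db AA OO X Y) (hB : B ⊆ X) :
    Y ⊆ commonObjs Db OO B :=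
  (isConcept_iff.mp h).2 ▸ commonObjs_anti hB

lemma IsConcept.commonAttrs_commonObjs_subset (h : IsConcept Db AA OO X Y) (hB : B ⊆ X) :
    commonAttrs Db AA (commonObjs Db OO B) ⊆ X :=
  (isConcept_iff.mp h).1 ▸ commonAttrs_anti (h.subset_commonObjs_of_subset hB)

end Derivation

section Projection

omit [DecidableEq β]

variable {Db : α → β → Prop} {AA A X : Finset α} {OO Y : Finset β}

/-- `(X, Y) ∈ LE_A`. -/
def IsLeastInClass (Db : α → β → Prop) (AA : Finset α) (OO : Finset β) (A X : Finset α)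
    (Y : Finset β) : Prop :=
  IsConcept Db AA OO X Y ∧
    ∀ X' Y', IsConcept Db AA OO X' Y' → X' ∩ A = X ∩ A → X ⊆ X' ∧ Y' ⊆ Y

theorem isLeastInClass_commonAttrs_commonObjs (hA : A ⊆ AA) (h : IsConcept Db A OO X Y) :
    IsLeastInClass Db AA OO A (commonAttrs Db AA Y) Y ∧ commonAttrs Db AA Y ∩ A = X := by
  obtain ⟨hX, hY⟩ := isConcept_iff.mp h
  have htrace : commonAttrs Db AA Y ∩ A = X := by rw [commonAttrs_inter_of_subset hA, hX]
  refine ⟨⟨hY ▸ isConcept_commonAttrs_commonObjs (h.1.1.trans hA),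
    fun X' Y' h' htrace' => ?_⟩, htrace⟩
  have hXX' : X ⊆ X' := by
    rw [← htrace, ← htrace']
    exact Finset.inter_subset_left
  rw [hY]
  exact ⟨h'.commonAttrs_commonObjs_subset hXX', h'.subset_commonObjs_of_subset hXX'⟩

theorem IsLeastInClass.isConcept_inter (hA : A ⊆ AA) (h : IsLeastInClass Db AA OO A X Y) :
    IsConcept Db A OO (X ∩ A) Y := by
  obtain ⟨hconcept, hleast⟩ := h
  have hXA : X ∩ A ⊆ X := Finset.inter_subset_left
  have hgen := isConcept_commonAttrs_commonObjs (Db := Db) (OO := OO) (hXA.trans hconcept.1.1)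
  have hgen_trace : commonAttrs Db AA (commonObjs Db OO (X ∩ A)) ∩ A = X ∩ A :=
    (Finset.inter_subset_inter_right (hconcept.commonAttrs_commonObjs_subset hXA)).antisymm
      (Finset.subset_inter (isRect_commonObjs (hXA.trans hconcept.1.1)).subset_commonAttrs
        Finset.inter_subset_right)
  have hY : Y = commonObjs Db OO (X ∩ A) :=
    (hconcept.subset_commonObjs_of_subset hXA).antisymm (hleast _ _ hgen hgen_trace).2
  refine isConcept_iff.mpr ⟨?_, hY⟩
  rw [← commonAttrs_inter_of_subset hA, ← (isConcept_iff.mp hconcept).1]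

end Projection

/-- The concepts of the projected database are exactly the projections of the
least elements of the `A`-equivalence classes of the concepts of `Db`. -/
theorem projection_theorem (Db : α → β → Prop) (AA : Finset α) (OO : Finset β)
    (A : Finset α) (hA : A ⊆ AA) :
    {C : Finset α × Finset β | IsConcept Db A OO C.1 C.2} =
      (fun C : Finset α × Finset β => (C.1 ∩ A, C.2)) ''
        {C : Finset α × Finset β | IsConcept Db AA OO C.1 C.2 ∧
          ∀ X' Y', IsConcept Db AA OO X' Y' → X' ∩ A = C.1 ∩ A →
            C.1 ⊆ X' ∧ Y' ⊆ C.2} := by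
  ext ⟨X, Y⟩
  constructor
  · intro h
    obtain ⟨hleast, htrace⟩ := isLeastInClass_commonAttrs_commonObjs hA h
    exact ⟨(commonAttrs Db AA Y, Y), hleast, Prod.ext htrace rfl⟩
  · rintro ⟨⟨X₀, Y₀⟩, hleast, hproj⟩
    obtain ⟨rfl, rfl⟩ := Prod.mk.inj hproj
    exact IsLeastInClass.isConcept_inter hA hleast
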